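/- arXiv:math/0410001 — 2 statements merged into one kernel-verified Lean document; each statement's English description precedes it below -/
import Mathlib

section
/- There exists a universal constant c > 0 such that for every dimension n and every centrally symmetric convex body K ⊂ ℝ^n, one has (1/2)·σ(S^{n-1} ∩ (1/2)K) ≤ γ(√n·K) ≤ σ(S^{n-1} ∩ 2K) + e^{−cn}. -/
/-!
In polar coordinates `x = r • u` the Gaussian measure is the product of `σ` (in `u`) and a radial
law (in `r`), and the radius concentrates at scale `√n`: by Chernoff bounds `‖x‖ ≤ 2√n` with
probability at least `1/2`, and `‖x‖ < √n/2` with probability at most `e^{-n/4}`. A symmetric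
convex body is balanced, so `t • K` grows with `t ≥ 0`. Hence `u ∈ K/2` and `r ≤ 2√n` force
`x ∈ √n K`, which gives the lower bound, while `x ∈ √n K` and `r ≥ √n/2` force `u ∈ 2K`, which
gives the upper bound with `c = 1/4`.
-/

open MeasureTheory Metric
open scoped Pointwise ENNReal

noncomputable section

/-- `ℝ^n` with its Euclidean structure. -/
abbrev Euc (n : ℕ) := EuclideanSpace ℝ (Fin n)

/-- The rotation-invariant probability measure `σ` on the unit Euclidean sphere `S^{n-1}`,
obtained by normalizing the canonical (rotation-invariant) sphere measure. -/
noncomputable def sphσ (n : ℕ) : Measure (Metric.sphere (0 : Euc n) 1) :=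
  ((volume : Measure (Euc n)).toSphere Set.univ)⁻¹ • (volume : Measure (Euc n)).toSphere

/-- `M(K) = ∫_{S^{n-1}} ‖x‖ dσ(x)`, where `N` is the norm with unit ball `K`. -/
noncomputable def Mnorm (n : ℕ) (N : Euc n → ℝ) : ℝ :=
  ∫ x : Metric.sphere (0 : Euc n) 1, N x ∂(sphσ n)

/-- `d(K) = min(−log σ{x ∈ S^{n-1} : ‖x‖ ≤ M/2}, n)`. -/
noncomputable def dDim (n : ℕ) (N : Euc n → ℝ) : ℝ :=
  min (- Real.log ((sphσ n {x | N x.val ≤ Mnorm n N / 2}).toReal)) n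

/-- The standard Gaussian probability measure on `ℝ^n`,
with density `(2π)^{-n/2} e^{-|x|²/2}` w.r.t. Lebesgue measure. -/
noncomputable def gaussian (n : ℕ) : Measure (Euc n) :=
  volume.withDensity fun x =>
    ENNReal.ofReal ((2 * Real.pi) ^ (-(n : ℝ) / 2) * Real.exp (-‖x‖ ^ 2 / 2))

open Set Real

section PolarSector

variable {E : Type*} [NormedAddCommGroup E] [NormedSpace ℝ E]

def polarSector (A : Set E) (J : Set ℝ) : Set E := {x | x ≠ 0 ∧ ‖x‖⁻¹ • x ∈ A ∧ ‖x‖ ∈ J}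

theorem polarSector_eq_image (A : Set E) (J : Set ℝ) :
    polarSector A J = Subtype.val ''
      (homeomorphUnitSphereProd E ⁻¹' ((Subtype.val ⁻¹' A) ×ˢ (Subtype.val ⁻¹' J))) := by
  ext x
  simp [polarSector, and_assoc, and_comm]

theorem polarSector_univ_Iic (ρ : ℝ) :
    polarSector (univ : Set E) (Iic ρ) = closedBall 0 ρ \ {0} := by
  ext x
  simp [polarSector, and_comm]

theorem polarSector_smul_Iic_subset {K : Set E} (hK : Balanced ℝ K) {s ρ r : ℝ} (hs : 0 ≤ s)
    (h : s * ρ ≤ r) : polarSector (s • K) (Iic ρ) ⊆ r • K := by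
  rintro x ⟨hx, hxK, hxρ : ‖x‖ ≤ ρ⟩
  have hmem := smul_mem_smul_set (a := ‖x‖) hxK
  rw [smul_inv_smul₀ (norm_ne_zero_iff.2 hx), ← mul_smul] at hmem
  refine hK.smul_mono ?_ hmem
  rw [norm_mul, norm_norm, Real.norm_of_nonneg hs, Real.norm_eq_abs, mul_comm]
  exact (mul_le_mul_of_nonneg_left hxρ hs).trans (h.trans (le_abs_self r))

theorem smul_subset_polarSector_union_ball {K : Set E} (hK : Balanced ℝ K) {s ρ r : ℝ}
    (hρ : 0 < ρ) (hr : 0 ≤ r) (h : r ≤ s * ρ) : r • K ⊆ polarSector (s • K) univ ∪ ball 0 ρ := by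
  intro x hxK
  rcases lt_or_ge ‖x‖ ρ with hxρ | hxρ
  · exact Or.inr (mem_ball_zero_iff.2 hxρ)
  have hx : 0 < ‖x‖ := hρ.trans_le hxρ
  refine Or.inl ⟨norm_pos_iff.1 hx, hK.smul_mono (a := ‖x‖⁻¹ * r) ?_ ?_, mem_univ _⟩
  · rw [norm_mul, norm_inv, norm_norm, Real.norm_of_nonneg hr, inv_mul_le_iff₀ hx]
    calc r ≤ s * ρ := h
      _ ≤ |s| * ‖x‖ := mul_le_mul (le_abs_self s) hxρ hρ.le (abs_nonneg s)
      _ = ‖x‖ * ‖s‖ := by rw [Real.norm_eq_abs, mul_comm]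
  · rw [mul_smul]
    exact smul_mem_smul_set hxK

end PolarSector

section PolarMeasure

variable {E : Type*} [NormedAddCommGroup E] [NormedSpace ℝ E] [FiniteDimensional ℝ E]
  [MeasurableSpace E] [BorelSpace E] (μ : Measure E) [μ.IsAddHaarMeasure]
  {f : ℝ → ℝ≥0∞} {A : Set E} {J : Set ℝ}

theorem withDensity_norm_polarSector (hf : Measurable f) (hA : MeasurableSet A)
    (hJ : MeasurableSet J) :
    μ.withDensity (fun x => f ‖x‖) (polarSector A J) =
      μ.toSphere (Subtype.val ⁻¹' A) *
        ∫⁻ r in Subtype.val ⁻¹' J, f r ∂Measure.volumeIoiPow (Module.finrank ℝ E - 1) := by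
  have h0 : MeasurableSet ({0}ᶜ : Set E) := (measurableSet_singleton 0).compl
  set e := homeomorphUnitSphereProd E
  have hS : MeasurableSet (e ⁻¹' ((Subtype.val ⁻¹' A) ×ˢ (Subtype.val ⁻¹' J))) :=
    e.measurable ((measurable_subtype_coe hA).prod (measurable_subtype_coe hJ))
  rw [polarSector_eq_image, withDensity_apply _
      ((MeasurableEmbedding.subtype_coe h0).measurableSet_image.2 hS),
    ← setLIntegral_subtype h0]
  have hpolar := μ.measurePreserving_homeomorphUnitSphereProd.setLIntegral_comp_preimage_emb
    e.measurableEmbedding (fun z => f z.2) ((Subtype.val ⁻¹' A) ×ˢ (Subtype.val ⁻¹' J))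
  simp only [homeomorphUnitSphereProd_apply_snd_coe] at hpolar
  rw [hpolar, ← Measure.prod_restrict, lintegral_prod _ (by fun_prop)]
  dsimp only
  rw [lintegral_const, Measure.restrict_apply_univ, mul_comm]

theorem withDensity_norm_polarSector_eq_mul [Nontrivial E] (hf : Measurable f)
    (hA : MeasurableSet A) (hJ : MeasurableSet J) :
    μ.withDensity (fun x => f ‖x‖) (polarSector A J) =
      ((μ.toSphere univ)⁻¹ • μ.toSphere) (Subtype.val ⁻¹' A) *
        μ.withDensity (fun x => f ‖x‖) (polarSector univ J) := by
  rw [withDensity_norm_polarSector μ hf hA hJ, withDensity_norm_polarSector μ hf .univ hJ,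
    Measure.smul_apply, smul_eq_mul, preimage_univ, mul_mul_mul_comm,
    ENNReal.inv_mul_cancel (Measure.measure_univ_ne_zero.2 μ.toSphere_ne_zero) (measure_ne_top _ _),
    one_mul]

end PolarMeasure

theorem lintegral_ofReal_mul_exp_neg_mul_sq_norm {V : Type*} [NormedAddCommGroup V]
    [InnerProductSpace ℝ V] [FiniteDimensional ℝ V] [MeasurableSpace V] [BorelSpace V]
    {C b : ℝ} (hC : 0 ≤ C) (hb : 0 < b) :
    ∫⁻ x : V, ENNReal.ofReal (C * exp (-b * ‖x‖ ^ 2)) =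
      ENNReal.ofReal (C * (π / b) ^ (Module.finrank ℝ V / 2 : ℝ)) := by
  have hval := GaussianFourier.integral_rexp_neg_mul_sq_norm (V := V) hb
  have hint : Integrable fun x : V => exp (-b * ‖x‖ ^ 2) :=
    Integrable.of_integral_ne_zero (by rw [hval]; positivity)
  rw [← ofReal_integral_eq_lintegral_ofReal (hint.const_mul C)
    (ae_of_all _ fun x => by positivity), integral_const_mul, hval]

section Gaussian

variable {n : ℕ}

instance : IsProbabilityMeasure (gaussian n) where
  measure_univ := by
    have hdens : ∀ x : Euc n, -‖x‖ ^ 2 / 2 = -(1 / 2) * ‖x‖ ^ 2 := fun x => by ring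
    rw [gaussian, withDensity_apply _ .univ, Measure.restrict_univ]
    simp_rw [hdens]
    rw [lintegral_ofReal_mul_exp_neg_mul_sq_norm (by positivity) (by norm_num),
      finrank_euclideanSpace_fin, div_div_eq_mul_div, div_one, mul_comm π 2, neg_div,
      rpow_neg (by positivity), inv_mul_cancel₀ (by positivity), ENNReal.ofReal_one]

/-- Chernoff bound: on `S` the density of `gaussian n` is at most `eᵃ (2b)^{-n/2}` times the
density of the centred Gaussian with covariance `(2b)⁻¹ • 1`. -/
theorem gaussian_le_of_forall_mem {S : Set (Euc n)} {a b : ℝ} (hb : 0 < b)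
    (h : ∀ x ∈ S, (b - 1 / 2) * ‖x‖ ^ 2 ≤ a) :
    gaussian n S ≤ ENNReal.ofReal (exp (a - n / 2 * log (2 * b))) := by
  set C := (2 * π) ^ (-(n : ℝ) / 2) * exp a with hC
  have hmeas : Measurable fun x : Euc n => ENNReal.ofReal (C * exp (-b * ‖x‖ ^ 2)) := by
    fun_prop
  calc gaussian n S
      = ∫⁻ x in S, ENNReal.ofReal ((2 * π) ^ (-(n : ℝ) / 2) * exp (-‖x‖ ^ 2 / 2)) :=
        withDensity_apply' _ _
    _ ≤ ∫⁻ x in S, ENNReal.ofReal (C * exp (-b * ‖x‖ ^ 2)) := by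
        refine setLIntegral_mono hmeas fun x hx => ENNReal.ofReal_le_ofReal ?_
        rw [mul_assoc, ← exp_add]
        gcongr
        linarith [h x hx]
    _ ≤ ∫⁻ x, ENNReal.ofReal (C * exp (-b * ‖x‖ ^ 2)) := setLIntegral_le_lintegral _ _
    _ = ENNReal.ofReal (exp (a - n / 2 * log (2 * b))) := by
        rw [lintegral_ofReal_mul_exp_neg_mul_sq_norm (by positivity) hb,
          finrank_euclideanSpace_fin]
        congr 1
        rw [hC, rpow_def_of_pos (by positivity), rpow_def_of_pos (by positivity),
          mul_comm _ (exp a), mul_assoc, ← exp_add, ← exp_add, log_mul two_ne_zero pi_ne_zero,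
          log_div pi_ne_zero hb.ne', log_mul two_ne_zero hb.ne']
        ring_nf

theorem half_le_gaussian_closedBall [NeZero n] :
    1 / 2 ≤ gaussian n (closedBall 0 (2 * √n)) := by
  have hn : (1 : ℝ) ≤ n := Nat.one_le_cast.2 (Nat.one_le_iff_ne_zero.2 (NeZero.ne n))
  have htail : gaussian n (closedBall 0 (2 * √n))ᶜ ≤ 1 / 2 := by
    refine (gaussian_le_of_forall_mem (a := -(3 / 2) * n) (b := 1 / 8) (by norm_num)
      fun x hx => ?_).trans ?_
    · have hx : 2 * √n < ‖x‖ := by simpa using hx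
      nlinarith [sq_sqrt (Nat.cast_nonneg n : (0 : ℝ) ≤ n), sqrt_nonneg n]
    · rw [ENNReal.ofReal_le_iff_le_toReal (by simp), ENNReal.toReal_div, ENNReal.toReal_one,
        ENNReal.toReal_ofNat, show (2 : ℝ) * (1 / 8) = (2 ^ 2)⁻¹ by norm_num, log_inv, log_pow]
      calc _ ≤ exp (-log 2) := exp_le_exp.2 (by push_cast; nlinarith [log_two_lt_d9])
        _ = 1 / 2 := by rw [exp_neg, exp_log two_pos, one_div]
  have hcompl := prob_compl_eq_one_sub (μ := gaussian n)
    (measurableSet_closedBall (x := 0) (ε := 2 * √n)).compl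
  rw [compl_compl] at hcompl
  calc (1 / 2 : ℝ≥0∞) = 1 - 1 / 2 := by rw [one_div, ENNReal.one_sub_inv_two]
    _ ≤ 1 - gaussian n (closedBall 0 (2 * √n))ᶜ := tsub_le_tsub_left htail 1
    _ = gaussian n (closedBall 0 (2 * √n)) := hcompl.symm

theorem gaussian_ball_le : gaussian n (ball 0 (√n / 2)) ≤ ENNReal.ofReal (exp (-n / 4)) := by
  refine (gaussian_le_of_forall_mem (a := n / 4) (b := 3 / 2) (by norm_num)
    fun x hx => ?_).trans (ENNReal.ofReal_le_ofReal (exp_le_exp.2 ?_))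
  · have hx : ‖x‖ < √n / 2 := by simpa using hx
    nlinarith [sq_sqrt (Nat.cast_nonneg n : (0 : ℝ) ≤ n), norm_nonneg x]
  · have hlog : 1 ≤ log 3 := (le_log_iff_exp_le (by norm_num)).2 (by linarith [exp_one_lt_d9])
    rw [show (2 : ℝ) * (3 / 2) = 3 by norm_num]
    nlinarith [(Nat.cast_nonneg n : (0 : ℝ) ≤ n)]

end Gaussian

section Transfer

variable {n : ℕ} [NeZero n]

instance : IsProbabilityMeasure (sphσ n) := by
  have : NeZero (volume : Measure (Euc n)).toSphere := ⟨Measure.toSphere_ne_zero _⟩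
  rw [sphσ]
  infer_instance

theorem gaussian_polarSector {A : Set (Euc n)} (hA : MeasurableSet A) {J : Set ℝ}
    (hJ : MeasurableSet J) :
    gaussian n (polarSector A J) = sphσ n {x | ↑x ∈ A} * gaussian n (polarSector univ J) :=
  withDensity_norm_polarSector_eq_mul volume
    (f := fun r => ENNReal.ofReal ((2 * π) ^ (-(n : ℝ) / 2) * exp (-r ^ 2 / 2))) (by fun_prop)
    hA hJ

theorem gaussian_singleton (x : Euc n) : gaussian n {x} = 0 :=
  withDensity_absolutelyContinuous _ _ (measure_singleton x)

theorem half_mul_sphσ_le_gaussian {K : Set (Euc n)} (hK : Balanced ℝ K)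
    (hKm : MeasurableSet K) :
    1 / 2 * sphσ n {x | ↑x ∈ (1 / 2 : ℝ) • K} ≤ gaussian n (√n • K) := by
  have hball :
      gaussian n (polarSector univ (Iic (2 * √n))) = gaussian n (closedBall 0 (2 * √n)) := by
    rw [polarSector_univ_Iic, measure_sdiff_null (gaussian_singleton 0)]
  calc 1 / 2 * sphσ n {x | ↑x ∈ (1 / 2 : ℝ) • K}
      ≤ sphσ n {x | ↑x ∈ (1 / 2 : ℝ) • K} * gaussian n (polarSector univ (Iic (2 * √n))) := by
        rw [mul_comm, hball]
        exact mul_le_mul_right half_le_gaussian_closedBall _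
    _ = gaussian n (polarSector ((1 / 2 : ℝ) • K) (Iic (2 * √n))) :=
        (gaussian_polarSector (hKm.const_smul₀ _) measurableSet_Iic).symm
    _ ≤ gaussian n (√n • K) :=
        measure_mono (polarSector_smul_Iic_subset hK (by norm_num) (le_of_eq (by ring)))

theorem gaussian_le_sphσ_add {K : Set (Euc n)} (hK : Balanced ℝ K) (hKm : MeasurableSet K) :
    gaussian n (√n • K) ≤ sphσ n {x | ↑x ∈ (2 : ℝ) • K} + ENNReal.ofReal (exp (-n / 4)) := by
  have hn : (0 : ℝ) < √n := sqrt_pos.2 (Nat.cast_pos.2 (Nat.pos_of_ne_zero (NeZero.ne n)))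
  calc gaussian n (√n • K)
      ≤ gaussian n (polarSector ((2 : ℝ) • K) univ ∪ ball 0 (√n / 2)) :=
        measure_mono <|
          smul_subset_polarSector_union_ball hK (by positivity) hn.le (le_of_eq (by ring))
    _ ≤ gaussian n (polarSector ((2 : ℝ) • K) univ) + gaussian n (ball 0 (√n / 2)) :=
        measure_union_le _ _
    _ ≤ sphσ n {x | ↑x ∈ (2 : ℝ) • K} + ENNReal.ofReal (exp (-n / 4)) := by
        rw [gaussian_polarSector (hKm.const_smul₀ _) .univ]
        exact add_le_add (mul_le_of_le_one_right' prob_le_one) gaussian_ball_le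

end Transfer

/-- Lemma `transfer`: there is a universal constant `c > 0` such that for
every `n ≥ 1` and every centrally symmetric convex body `K ⊆ ℝ^n`,
`(1/2)·σ(S^{n-1} ∩ (1/2)K) ≤ γ(√n·K) ≤ σ(S^{n-1} ∩ 2K) + e^{−cn}`. -/
theorem statement6 :
    ∃ c : ℝ, 0 < c ∧
      ∀ (n : ℕ), 1 ≤ n →
        ∀ K : Set (Euc n), Convex ℝ K → IsCompact K → (interior K).Nonempty →
          (∀ x ∈ K, -x ∈ K) →
          (1 / 2) * (sphσ n {x | (x : Euc n) ∈ (1 / 2 : ℝ) • K}).toReal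
              ≤ (gaussian n (Real.sqrt n • K)).toReal
            ∧ (gaussian n (Real.sqrt n • K)).toReal
              ≤ (sphσ n {x | (x : Euc n) ∈ (2 : ℝ) • K}).toReal + Real.exp (-c * n) := by
  refine ⟨1 / 4, by norm_num, fun n hn K hconv hcompact _ hsymm => ?_⟩
  have : NeZero n := ⟨Nat.one_le_iff_ne_zero.1 hn⟩
  have hK : Balanced ℝ K := (balanced_iff_neg_mem hconv).2 hsymm
  have hKm : MeasurableSet K := hcompact.isClosed.measurableSet
  constructor
  · have h := ENNReal.toReal_mono (measure_ne_top _ _) (half_mul_sphσ_le_gaussian hK hKm)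
    rwa [ENNReal.toReal_mul, ENNReal.toReal_div, ENNReal.toReal_one, ENNReal.toReal_ofNat] at h
  · have h := ENNReal.toReal_mono (by finiteness) (gaussian_le_sphσ_add hK hKm)
    rw [ENNReal.toReal_add (measure_ne_top _ _) ENNReal.ofReal_ne_top,
      ENNReal.toReal_ofReal (exp_pos _).le] at h
    convert h using 3
    ring
end
end

section
/- There exists a universal constant c̄ > 0 such that for every dimension k ≥ 1 and every norm ‖·‖ on ℝ^k with centrally symmetric convex unit ball: if X₁, …, X_k are independent random vectors each distributed uniformly on the unit Euclidean sphere S^{k-1} ⊂ ℝ^k, and M denotes the average of ‖·‖ over S^{k-1}, then Prob{ (1/k) Σ_{i=1}^k ‖X_i‖ > M/2 } ≥ c̄/√k. -/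
open MeasureTheory Metric
open scoped Pointwise ENNReal

noncomputable section

open scoped RealInnerProductSpace

/-!
Let `b` be the maximum of the norm `N` on the unit sphere, attained at `x₀`, so that `N ≤ b ‖·‖`.
For a unit vector `x` and `t = ⟪x, x₀⟫`, the triangle inequality for `N` along
`x₀ = (x₀ - t x) + t x`, with `‖x₀ - t x‖ = √(1 - t²) ≤ 1 - t² / 2`, gives `N x ≥ (b / 2) |t|`.
Rotation invariance of `σ` (rotate a coordinate vector onto `x₀`, or onto `eᵢ ± eⱼ`) yields
`∫ ⟪x, x₀⟫² dσ = 1 / k` and `∫ ⟪x, x₀⟫⁴ dσ = 3 / (k (k + 2))`; integrating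
`√k t² - k^(3/2) t⁴ / 4 ≤ |t|` then gives `∫ |⟪x, x₀⟫| dσ ≥ 1 / (4 √k)`, so `M ≥ b / (8 √k)`.
Finally `(1/k) ∑ N Xᵢ` has mean `M` and never exceeds `b`, so by the reverse Markov inequality it
exceeds `M / 2` with probability at least `M / (2 b) ≥ 1 / (16 √k)`.
-/

section NormedSpace

variable {E : Type*} [NormedAddCommGroup E] [NormedSpace ℝ E]

def LinearIsometryEquiv.sphereMap (e : E ≃ₗᵢ[ℝ] E) : sphere (0 : E) 1 ≃ₜ sphere (0 : E) 1 :=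
  e.toHomeomorph.subtype fun x => by simp

@[simp]
lemma LinearIsometryEquiv.coe_sphereMap (e : E ≃ₗᵢ[ℝ] E) (x : sphere (0 : E) 1) :
    (e.sphereMap x : E) = e x := rfl

lemma LinearIsometryEquiv.measurePreserving_sphereMap_toSphere [MeasurableSpace E]
    [BorelSpace E] (e : E ≃ₗᵢ[ℝ] E) {μ : Measure E} (he : MeasurePreserving e μ μ) :
    MeasurePreserving e.sphereMap μ.toSphere μ.toSphere := by
  have hmeas := e.sphereMap.continuous.measurable
  refine ⟨hmeas, Measure.ext fun s hs => ?_⟩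
  have hcone : Set.Ioo (0 : ℝ) 1 • ((↑) '' (e.sphereMap ⁻¹' s) : Set E)
      = e ⁻¹' (Set.Ioo (0 : ℝ) 1 • ((↑) '' s)) := by
    ext y
    simp only [Set.mem_smul, Set.mem_image, Set.mem_preimage]
    constructor
    · rintro ⟨c, hc, _, ⟨x, hx, rfl⟩, rfl⟩
      exact ⟨c, hc, e x, ⟨_, hx, rfl⟩, by simp⟩
    · rintro ⟨c, hc, _, ⟨x, hx, rfl⟩, hy⟩
      refine ⟨c, hc, e.symm x, ⟨e.sphereMap.symm x, by simpa using hx, rfl⟩, ?_⟩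
      rw [← e.symm.map_smul, hy, e.symm_apply_apply]
  rw [Measure.map_apply hmeas hs, Measure.toSphere_apply' _ (hmeas hs),
    Measure.toSphere_apply' _ hs, hcone,
    he.measure_preimage_emb e.toHomeomorph.measurableEmbedding]

lemma Seminorm.continuous_of_finiteDimensional [FiniteDimensional ℝ E] (N : Seminorm ℝ E) :
    Continuous N :=
  continuousOn_univ.1 (N.convexOn.continuousOn isOpen_univ)

lemma Seminorm.le_mul_norm_of_isMaxOn_sphere (N : Seminorm ℝ E) {x₀ : E}
    (hmax : IsMaxOn N (sphere 0 1) x₀) (v : E) : N v ≤ N x₀ * ‖v‖ := by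
  rcases eq_or_ne v 0 with rfl | hv
  · simp
  have hunit : ‖v‖⁻¹ • v ∈ sphere (0 : E) 1 := by simp [norm_smul, hv]
  calc N v = ‖v‖ * N (‖v‖⁻¹ • v) := by
        rw [map_smul_eq_mul, norm_inv, norm_norm, mul_inv_cancel_left₀ (norm_ne_zero_iff.2 hv)]
    _ ≤ ‖v‖ * N x₀ := mul_le_mul_of_nonneg_left (hmax hunit) (norm_nonneg v)
    _ = N x₀ * ‖v‖ := mul_comm _ _

end NormedSpace

section Moments

variable {E : Type*} [NormedAddCommGroup E] [InnerProductSpace ℝ E]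

lemma sum_sq_inner_stdOrthonormalBasis_of_mem_sphere [FiniteDimensional ℝ E]
    (x : sphere (0 : E) 1) : ∑ i, ⟪(x : E), stdOrthonormalBasis ℝ E i⟫ ^ 2 = 1 := by
  simp [OrthonormalBasis.sum_sq_inner_left]

variable [MeasurableSpace E] [BorelSpace E] {μ : Measure (sphere (0 : E) 1)}

def IsRotationInvariant (μ : Measure (sphere (0 : E) 1)) : Prop :=
  ∀ e : E ≃ₗᵢ[ℝ] E, MeasurePreserving e.sphereMap μ μ

lemma integrable_of_continuous_sphere [FiniteDimensional ℝ E] [IsFiniteMeasure μ]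
    {f : sphere (0 : E) 1 → ℝ} (hf : Continuous f) : Integrable f μ :=
  hf.integrable_of_hasCompactSupport (.of_compactSpace f)

lemma integral_comp_inner_eq_of_norm_eq (hμ : IsRotationInvariant μ) (f : ℝ → ℝ) {u v : E}
    (huv : ‖u‖ = ‖v‖) : ∫ x, f ⟪(x : E), u⟫ ∂μ = ∫ x, f ⟪(x : E), v⟫ ∂μ := by
  set e := Submodule.reflection (ℝ ∙ (u - v))ᗮ
  have hvu : e v = u := by rw [← Submodule.reflection_sub huv, Submodule.reflection_reflection]
  rw [← (hμ e).integral_comp e.sphereMap.measurableEmbedding]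
  simp [← hvu]

lemma integral_inner_pow_eq_norm_pow_mul (hμ : IsRotationInvariant μ) (p : ℕ) (u : E) {v : E}
    (hv : ‖v‖ = 1) : ∫ x, ⟪(x : E), u⟫ ^ p ∂μ = ‖u‖ ^ p * ∫ x, ⟪(x : E), v⟫ ^ p ∂μ := by
  have hnorm : ‖u‖ = ‖‖u‖ • v‖ := by simp [norm_smul, hv]
  rw [integral_comp_inner_eq_of_norm_eq hμ (· ^ p) hnorm, ← integral_const_mul]
  simp [real_inner_smul_right, mul_pow]

lemma integral_inner_sq_mul_inner_sq [FiniteDimensional ℝ E] [IsFiniteMeasure μ]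
    (hμ : IsRotationInvariant μ) {u v w : E} (hu : ‖u‖ = 1) (hv : ‖v‖ = 1) (huv : ⟪u, v⟫ = 0)
    (hw : ‖w‖ = 1) :
    ∫ x, ⟪(x : E), u⟫ ^ 2 * ⟪(x : E), v⟫ ^ 2 ∂μ = (∫ x, ⟪(x : E), w⟫ ^ 4 ∂μ) / 3 := by
  set I := ∫ x, ⟪(x : E), w⟫ ^ 4 ∂μ
  have hI : ∀ z : E, ∫ x, ⟪(x : E), z⟫ ^ 4 ∂μ = ‖z‖ ^ 4 * I := fun z =>
    integral_inner_pow_eq_norm_pow_mul hμ 4 z hw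
  have hplus : ‖u + v‖ ^ 4 = 4 := by
    rw [show 4 = 2 * 2 from rfl, pow_mul, norm_add_sq_real, hu, hv, huv]; norm_num
  have hminus : ‖u - v‖ ^ 4 = 4 := by
    rw [show 4 = 2 * 2 from rfl, pow_mul, norm_sub_sq_real, hu, hv, huv]; norm_num
  have hint : ∀ z : E, Integrable (fun x : sphere (0 : E) 1 => ⟪(x : E), z⟫ ^ 4) μ :=
    fun z => integrable_of_continuous_sphere (by fun_prop)
  have hu4 := hint u
  have hv4 := hint v
  have hcross : Integrable (fun x : sphere (0 : E) 1 => ⟪(x : E), u⟫ ^ 2 * ⟪(x : E), v⟫ ^ 2) μ :=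
    integrable_of_continuous_sphere (by fun_prop)
  have hsum : ∫ x, (⟪(x : E), u + v⟫ ^ 4 + ⟪(x : E), u - v⟫ ^ 4) ∂μ
      = ∫ x, (2 * ⟪(x : E), u⟫ ^ 4 + 12 * (⟪(x : E), u⟫ ^ 2 * ⟪(x : E), v⟫ ^ 2)
          + 2 * ⟪(x : E), v⟫ ^ 4) ∂μ := by
    congr 1 with x
    rw [inner_add_right, inner_sub_right]
    ring
  rw [integral_add (hint _) (hint _), integral_add (by fun_prop) (by fun_prop),
    integral_add (by fun_prop) (by fun_prop), integral_const_mul, integral_const_mul,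
    integral_const_mul, hI, hI, hI, hI, hplus, hminus, hu, hv] at hsum
  linarith

lemma integral_inner_sq [FiniteDimensional ℝ E] [IsProbabilityMeasure μ]
    (hμ : IsRotationInvariant μ) {v : E} (hv : ‖v‖ = 1) :
    ∫ x, ⟪(x : E), v⟫ ^ 2 ∂μ = (Module.finrank ℝ E : ℝ)⁻¹ := by
  set b := stdOrthonormalBasis ℝ E
  have hb : ∀ i, ∫ x, ⟪(x : E), b i⟫ ^ 2 ∂μ = ∫ x, ⟪(x : E), v⟫ ^ 2 ∂μ := fun i => by
    rw [integral_inner_pow_eq_norm_pow_mul hμ 2 _ hv, b.norm_eq_one, one_pow, one_mul]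
  have hone : ∑ i, ∫ x, ⟪(x : E), b i⟫ ^ 2 ∂μ = 1 := by
    rw [← integral_finsetSum _ fun i _ => integrable_of_continuous_sphere (by fun_prop)]
    simp [b, sum_sq_inner_stdOrthonormalBasis_of_mem_sphere]
  simp only [hb, Finset.sum_const, Finset.card_univ, Fintype.card_fin, nsmul_eq_mul] at hone
  exact eq_inv_of_mul_eq_one_right hone

lemma integral_inner_pow_four [FiniteDimensional ℝ E] [IsProbabilityMeasure μ]
    (hμ : IsRotationInvariant μ) {v : E} (hv : ‖v‖ = 1) :
    ∫ x, ⟪(x : E), v⟫ ^ 4 ∂μ = 3 / (Module.finrank ℝ E * (Module.finrank ℝ E + 2)) := by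
  set b := stdOrthonormalBasis ℝ E
  set I := ∫ x, ⟪(x : E), v⟫ ^ 4 ∂μ
  have hb : ∀ i j, ∫ x, ⟪(x : E), b i⟫ ^ 2 * ⟪(x : E), b j⟫ ^ 2 ∂μ
      = I / 3 + if i = j then 2 * I / 3 else 0 := fun i j => by
    split_ifs with hij
    · have h4 := integral_inner_pow_eq_norm_pow_mul hμ 4 (b i) hv
      rw [b.norm_eq_one, one_pow, one_mul] at h4
      simp_rw [← hij, ← pow_add]
      rw [h4]
      ring
    · rw [integral_inner_sq_mul_inner_sq hμ (b.norm_eq_one i) (b.norm_eq_one j)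
        (b.orthonormal.2 hij) hv, add_zero]
  have hone : ∑ i, ∑ j, ∫ x, ⟪(x : E), b i⟫ ^ 2 * ⟪(x : E), b j⟫ ^ 2 ∂μ = 1 := by
    have hpt : ∀ x : sphere (0 : E) 1,
        ∑ i, ∑ j, ⟪(x : E), b i⟫ ^ 2 * ⟪(x : E), b j⟫ ^ 2 = 1 := fun x => by
      rw [← Finset.sum_mul_sum, sum_sq_inner_stdOrthonormalBasis_of_mem_sphere, one_mul]
    rw [Finset.sum_congr rfl fun i _ => (integral_finsetSum _ fun j _ =>
        integrable_of_continuous_sphere (by fun_prop)).symm,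
      ← integral_finsetSum _ fun i _ => integrable_of_continuous_sphere (by fun_prop)]
    simp [hpt]
  simp only [hb, Finset.sum_add_distrib, Finset.sum_ite_eq, Finset.mem_univ, if_true,
    Finset.sum_const, Finset.card_univ, Fintype.card_fin, nsmul_eq_mul] at hone
  rw [eq_div_iff fun h => one_ne_zero (by rw [← hone]; linear_combination (I / 3) * h)]
  linear_combination 3 * hone

lemma mul_sq_sub_pow_three_mul_pow_four_le_abs {s : ℝ} (hs : 0 ≤ s) (t : ℝ) :
    s * t ^ 2 - s ^ 3 * t ^ 4 / 4 ≤ |t| := by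
  have ha := abs_nonneg t
  rw [← sq_abs t, ← (Even.pow_abs ⟨2, rfl⟩ t)]
  rcases le_total (s * |t|) 1 with h | h
  · nlinarith [mul_nonneg hs ha, pow_nonneg (mul_nonneg hs ha) 3]
  · nlinarith [sq_nonneg ((s * |t|) ^ 2 / 2 - 1), mul_nonneg hs ha]

lemma one_div_four_mul_sqrt_finrank_le_integral_abs_inner [FiniteDimensional ℝ E]
    [IsProbabilityMeasure μ] (hμ : IsRotationInvariant μ) {v : E} (hv : ‖v‖ = 1) :
    1 / (4 * √(Module.finrank ℝ E)) ≤ ∫ x, |⟪(x : E), v⟫| ∂μ := by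
  set n : ℝ := (Module.finrank ℝ E : ℝ)
  set s := √n
  have hn : 0 < n := by
    have : Nontrivial E := ⟨v, 0, by rintro rfl; simp at hv⟩
    exact Nat.cast_pos.2 Module.finrank_pos
  have hs : 0 < s := Real.sqrt_pos.2 hn
  have hsn : s ^ 2 = n := Real.sq_sqrt hn.le
  have hlower := integral_mono (integrable_of_continuous_sphere (μ := μ) (by fun_prop))
    (integrable_of_continuous_sphere (by fun_prop))
    fun x : sphere (0 : E) 1 => mul_sq_sub_pow_three_mul_pow_four_le_abs hs.le ⟪(x : E), v⟫
  rw [integral_sub (integrable_of_continuous_sphere (by fun_prop))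
      (integrable_of_continuous_sphere (by fun_prop)), integral_const_mul, integral_div,
    integral_const_mul, integral_inner_sq hμ hv, integral_inner_pow_four hμ hv] at hlower
  refine le_trans ?_ hlower
  change 1 / (4 * s) ≤ s * n⁻¹ - s ^ 3 * (3 / (n * (n + 2))) / 4
  rw [← hsn]
  field_simp
  linarith

end Moments

section SeminormLowerBound

variable {E : Type*} [NormedAddCommGroup E] [InnerProductSpace ℝ E]

lemma Seminorm.half_mul_abs_inner_le_of_isMaxOn_sphere (N : Seminorm ℝ E) {x₀ : E}
    (hx₀ : x₀ ∈ sphere (0 : E) 1) (hmax : IsMaxOn N (sphere 0 1) x₀) {x : E} (hx : ‖x‖ = 1) :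
    N x₀ / 2 * |⟪x, x₀⟫| ≤ N x := by
  set t := ⟪x, x₀⟫
  have hx₀' : ‖x₀‖ = 1 := by simpa using hx₀
  have ht : |t| ≤ 1 := by simpa [hx, hx₀'] using abs_real_inner_le_norm x x₀
  have ht2 : t ^ 2 ≤ 1 := by nlinarith [sq_abs t, abs_nonneg t]
  have hperp : ‖x₀ - t • x‖ ≤ 1 - t ^ 2 / 2 := by
    have hsq : ‖x₀ - t • x‖ ^ 2 = 1 - t ^ 2 := by
      rw [norm_sub_sq_real, norm_smul, real_inner_smul_right, real_inner_comm, hx, hx₀',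
        Real.norm_eq_abs, mul_pow, sq_abs]
      ring
    refine (pow_le_pow_iff_left₀ (norm_nonneg _) (by linarith) two_ne_zero).1 ?_
    nlinarith
  have htri : N x₀ ≤ N x₀ * (1 - t ^ 2 / 2) + |t| * N x :=
    calc N x₀ = N ((x₀ - t • x) + t • x) := by rw [sub_add_cancel]
      _ ≤ N (x₀ - t • x) + N (t • x) := map_add_le_add N _ _
      _ ≤ N x₀ * (1 - t ^ 2 / 2) + |t| * N x := by
        rw [map_smul_eq_mul, Real.norm_eq_abs]
        gcongr
        exact (N.le_mul_norm_of_isMaxOn_sphere hmax _).trans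
          (mul_le_mul_of_nonneg_left hperp (apply_nonneg N x₀))
  rcases (abs_nonneg t).eq_or_lt with h0 | hpos
  · rw [← h0, mul_zero]; exact apply_nonneg N x
  · nlinarith [sq_abs t, apply_nonneg N x₀, apply_nonneg N x]

lemma Seminorm.div_eight_mul_sqrt_finrank_le_integral [FiniteDimensional ℝ E]
    [MeasurableSpace E] [BorelSpace E] {μ : Measure (sphere (0 : E) 1)} [IsProbabilityMeasure μ]
    (hμ : IsRotationInvariant μ) (N : Seminorm ℝ E) {x₀ : E} (hx₀ : x₀ ∈ sphere (0 : E) 1)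
    (hmax : IsMaxOn N (sphere 0 1) x₀) :
    N x₀ / (8 * √(Module.finrank ℝ E)) ≤ ∫ x, N x ∂μ := by
  have hcont := N.continuous_of_finiteDimensional
  calc N x₀ / (8 * √(Module.finrank ℝ E))
        = N x₀ / 2 * (1 / (4 * √(Module.finrank ℝ E))) := by ring
    _ ≤ N x₀ / 2 * ∫ x, |⟪(x : E), x₀⟫| ∂μ := by
        gcongr
        exact one_div_four_mul_sqrt_finrank_le_integral_abs_inner hμ (by simpa using hx₀)
    _ = ∫ x, N x₀ / 2 * |⟪(x : E), x₀⟫| ∂μ := (integral_const_mul _ _).symm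
    _ ≤ ∫ x, N x ∂μ :=
        integral_mono (integrable_of_continuous_sphere (by fun_prop))
          (integrable_of_continuous_sphere (by fun_prop)) fun x =>
          N.half_mul_abs_inner_le_of_isMaxOn_sphere hx₀ hmax (mem_sphere_zero_iff_norm.1 x.2)

end SeminormLowerBound

section ReverseMarkov

variable {Ω : Type*} [MeasurableSpace Ω] {P : Measure Ω} [IsProbabilityMeasure P]

lemma integral_sub_le_mul_measureReal_lt {Y : Ω → ℝ} (hY : Integrable Y P) {a b : ℝ}
    (hYb : ∀ ω, Y ω ≤ b) : ∫ ω, Y ω ∂P - a ≤ (b - a) * P.real {ω | a < Y ω} := by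
  have hmarkov := mul_meas_ge_le_integral_of_nonneg
    (Filter.Eventually.of_forall fun ω => sub_nonneg.2 (hYb ω)) ((integrable_const b).sub hY)
    (b - a)
  have hset : {ω | b - a ≤ (fun ω => b - Y ω) ω} = {ω | a < Y ω}ᶜ := by
    ext ω
    change b - a ≤ b - Y ω ↔ ¬ a < Y ω
    rw [not_lt]
    constructor <;> intro h <;> linarith
  rw [hset, probReal_compl_eq_one_sub₀ (aestronglyMeasurable_const.nullMeasurableSet_lt hY.1),
    integral_sub (integrable_const b) hY, integral_const, probReal_univ, one_smul] at hmarkov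
  linarith

lemma div_two_mul_le_measureReal_half_lt_average {k : ℕ} [NeZero k] {Y : Fin k → Ω → ℝ}
    (hY : ∀ i, Integrable (Y i) P) {m b : ℝ} (hm : ∀ i, ∫ ω, Y i ω ∂P = m) (hb : 0 < b)
    (hYb : ∀ i ω, Y i ω ≤ b) :
    m / (2 * b) ≤ P.real {ω | m / 2 < (1 / (k : ℝ)) * ∑ i, Y i ω} := by
  have hmean : ∫ ω, (1 / (k : ℝ)) * ∑ i, Y i ω ∂P = m := by
    rw [integral_const_mul, integral_finsetSum _ fun i _ => hY i]
    simp [hm, NeZero.ne k]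
  have hbound : ∀ ω, (1 / (k : ℝ)) * ∑ i, Y i ω ≤ b := fun ω => by
    have := Finset.sum_le_card_nsmul Finset.univ _ _ fun i _ => hYb i ω
    simp only [Finset.card_univ, Fintype.card_fin, nsmul_eq_mul] at this
    rwa [one_div, inv_mul_le_iff₀ (Nat.cast_pos.2 (NeZero.pos k))]
  have hmarkov := integral_sub_le_mul_measureReal_lt (a := m / 2)
    ((integrable_finsetSum _ fun i _ => hY i).const_mul (1 / (k : ℝ))) hbound
  rw [hmean] at hmarkov
  rw [div_le_iff₀ (by positivity)]
  have hp := measureReal_nonneg (μ := P) (s := {ω | m / 2 < (1 / (k : ℝ)) * ∑ i, Y i ω})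
  have hp1 := measureReal_le_one (μ := P) (s := {ω | m / 2 < (1 / (k : ℝ)) * ∑ i, Y i ω})
  rcases le_total 0 m with hm0 | hm0 <;> nlinarith

end ReverseMarkov

instance {k : ℕ} [NeZero k] : IsProbabilityMeasure (sphσ k) :=
  have : NeZero (volume : Measure (Euc k)).toSphere := ⟨Measure.toSphere_ne_zero _⟩
  isProbabilityMeasureSMul

lemma isRotationInvariant_sphσ (k : ℕ) : IsRotationInvariant (sphσ k) := fun e =>
  (e.measurePreserving_sphereMap_toSphere e.measurePreserving).smul_measure _

/-- lower bound for `P_E`: there is a universal constant `c̄ > 0` such that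
for every `k ≥ 1` and every norm on `ℝ^k`: if `X₁, …, X_k` are independent random vectors
uniformly distributed on `S^{k-1} ⊆ ℝ^k`, then `Prob{(1/k)∑ᵢ‖Xᵢ‖ > M/2} ≥ c̄/√k`. -/
theorem statement12 :
    ∃ cbar : ℝ, 0 < cbar ∧
      ∀ (k : ℕ), 1 ≤ k →
        ∀ (N : Seminorm ℝ (Euc k)), (∀ x, N x = 0 → x = 0) →
          ∀ (Ω : Type) (_ : MeasurableSpace Ω) (P : Measure Ω), IsProbabilityMeasure P →
            ∀ X : Fin k → Ω → (Metric.sphere (0 : Euc k) 1),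
              (∀ i, Measurable (X i)) →
              ProbabilityTheory.iIndepFun X P →
              (∀ i, Measure.map (X i) P = sphσ k) →
              (P {ω | Mnorm k N / 2
                  < (1 / (k : ℝ)) * ∑ i, N ((X i ω : Euc k))}).toReal
                ≥ cbar / Real.sqrt k := by
  refine ⟨1 / 16, by norm_num, fun k hk N hN Ω _ P _ X hX _ hXσ => ?_⟩
  have : NeZero k := ⟨by omega⟩
  have hNcont : Continuous fun x : sphere (0 : Euc k) 1 => N x :=
    N.continuous_of_finiteDimensional.comp continuous_subtype_val
  obtain ⟨x₀, hx₀, hmax⟩ := (isCompact_sphere (0 : Euc k) 1).exists_isMaxOn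
    (NormedSpace.sphere_nonempty.2 zero_le_one) N.continuous_of_finiteDimensional.continuousOn
  have hb : 0 < N x₀ := (apply_nonneg N x₀).lt_of_ne fun h => by simp [hN x₀ h.symm] at hx₀
  have hM : N x₀ / (8 * √k) ≤ Mnorm k N := by
    simpa [Mnorm] using
      N.div_eight_mul_sqrt_finrank_le_integral (isRotationInvariant_sphσ k) hx₀ hmax
  have hmean : ∀ i, ∫ ω, N (X i ω : Euc k) ∂P = Mnorm k N := fun i => by
    rw [Mnorm, ← hXσ i, integral_map (hX i).aemeasurable (hXσ i ▸ hNcont.aestronglyMeasurable)]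
  have hint : ∀ i, Integrable (fun ω => N (X i ω : Euc k)) P := fun i =>
    (MeasurePreserving.integrable_comp_of_integrable (f := X i) ⟨hX i, hXσ i⟩
      (integrable_of_continuous_sphere hNcont) :)
  calc 1 / 16 / √k = N x₀ / (8 * √k) / (2 * N x₀) := by field_simp; ring
    _ ≤ Mnorm k N / (2 * N x₀) := by gcongr
    _ ≤ _ := div_two_mul_le_measureReal_half_lt_average hint hmean hb fun i ω =>
        isMaxOn_iff.1 hmax _ (X i ω).2
end
end
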